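/- Fix a natural number n ≥ 1 and for f : ℝⁿ × ℝⁿ → ℝ define T f(y,t) = ∫_{[-1,1]ⁿ} f(x, y + t·x) dx for y ∈ ℝⁿ and t ∈ ℝ. Let Ω = [-1,1]^{n+1} ⊂ ℝⁿ × ℝ. If p, q ∈ [1,∞] satisfy q > p and (1/p, 1/q) lies outside the closed triangle given by the convex hull of the points (0,0), (1,1), and ((n+1)/(n+2), n/(n+2)), then there is no finite constant C such that ‖T f‖_{L^q(Ω)} ≤ C ‖f‖_{L^p(ℝ^{2n})} holds for all nonnegative f ∈ L^p(ℝ^{2n}). -/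

import Mathlib

open MeasureTheory Set
open scoped ENNReal NNReal

lemma pow_gap_false (c1 c2 e1 e2 : ℝ) (hc1 : 0 < c1) (he : e1 < e2)
    (H : ∀ δ : ℝ, 0 < δ → δ ≤ 1 → c1 * δ ^ e1 ≤ c2 * δ ^ e2) : False := by
  have h1 := H 1 one_pos le_rfl
  rw [Real.one_rpow, Real.one_rpow] at h1
  have hc2 : 0 < c2 := by nlinarith
  have key : ∀ δ : ℝ, 0 < δ → δ ≤ 1 → c1 ≤ c2 * δ ^ (e2 - e1) := by
    intro δ hδ hδ1
    have h := H δ hδ hδ1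
    have hpos : (0:ℝ) < δ ^ e1 := Real.rpow_pos_of_pos hδ _
    have hsplit : δ ^ e2 = δ ^ e1 * δ ^ (e2 - e1) := by
      rw [← Real.rpow_add hδ]; ring_nf
    rw [hsplit] at h
    have h' : c1 * δ ^ e1 ≤ (c2 * δ ^ (e2 - e1)) * δ ^ e1 := by nlinarith [h]
    exact le_of_mul_le_mul_right h' hpos
  set γ := e2 - e1 with hγ
  have hγpos : 0 < γ := by simp only [hγ]; linarith
  have hqpos : (0:ℝ) < c1 / (2 * c2) := by positivity
  set δ0 : ℝ := min 1 ((c1 / (2 * c2)) ^ (1 / γ)) with hδ0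
  have hδ0pos : 0 < δ0 := lt_min one_pos (Real.rpow_pos_of_pos hqpos _)
  have h2 := key δ0 hδ0pos (min_le_left _ _)
  have hb : δ0 ^ γ ≤ c1 / (2 * c2) := by
    have h3 : δ0 ^ γ ≤ ((c1 / (2 * c2)) ^ (1 / γ)) ^ γ :=
      Real.rpow_le_rpow hδ0pos.le (min_le_right _ _) hγpos.le
    rwa [← Real.rpow_mul hqpos.le, one_div, inv_mul_cancel₀ hγpos.ne', Real.rpow_one] at h3
  have h4 : c1 ≤ c2 * (c1 / (2 * c2)) :=
    h2.trans (mul_le_mul_of_nonneg_left hb hc2.le)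
  have h5 : c2 * (c1 / (2 * c2)) = c1 / 2 := by field_simp
  rw [h5] at h4
  linarith


lemma mem_triangle (n : ℕ) (a b : ℝ) (ha : 0 < a) (hab : b ≤ a)
    (h1 : (n : ℝ) * a ≤ ((n : ℝ) + 1) * b) (h2 : 2 * a - 1 ≤ b) :
    ((a, b) : ℝ × ℝ) ∈ convexHull ℝ {((0 : ℝ), (0 : ℝ)), (1, 1),
      (((n : ℝ) + 1) / ((n : ℝ) + 2), (n : ℝ) / ((n : ℝ) + 2))} := by
  set N : ℝ := (n : ℝ) with hN
  have hN0 : (0:ℝ) ≤ N := Nat.cast_nonneg n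
  rw [convexHull_insert ⟨(1,1), mem_insert _ _⟩, convexHull_pair, mem_convexJoin]
  have hb0 : 0 ≤ b := by nlinarith
  have ht : 0 < 2 * a - b := by nlinarith
  set t : ℝ := 2 * a - b with hT
  refine ⟨(0, 0), rfl, (a / t, b / t), ?_, ?_⟩
  · -- on segment from (1,1) to v
    refine ⟨((N + 1) * b - N * a) / t, ((N + 2) * (a - b)) / t, ?_, ?_, ?_, ?_⟩
    · apply div_nonneg; · linarith
      · linarith
    · apply div_nonneg; · nlinarith
      · linarith
    · field_simp
      ring
    · have hNe : N + 2 ≠ 0 := by nlinarith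
      apply Prod.ext <;> simp [Prod.smul_mk] <;> field_simp <;> ring
  · -- (a,b) on segment from (0,0) to (a/t, b/t)
    refine ⟨1 - t, t, by linarith, by linarith, by ring, ?_⟩
    apply Prod.ext <;> simp <;> field_simp


lemma key_ineq (n : ℕ) (p q : ℝ≥0∞) (hp : 1 ≤ p) (hpt : p ≠ ∞) (hq : 1 ≤ q) (C : ℝ≥0)
    (H : ∀ f : ((Fin n → ℝ) × (Fin n → ℝ)) → ℝ, MemLp f p volume →
      (∀ x, 0 ≤ f x) →
      eLpNorm (fun w : (Fin n → ℝ) × ℝ =>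
          ∫ x in Icc (-1 : Fin n → ℝ) 1, f (x, w.1 + w.2 • x)) q
          (volume.restrict ((Icc (-1 : Fin n → ℝ) 1) ×ˢ (Icc (-1 : ℝ) 1)))
        ≤ C * eLpNorm f p volume)
    (r s : ℝ) (hr : 0 < r) (hr1 : r ≤ 1) (hs : 0 < s) (hs1 : s ≤ 1) :
    (2*r)^n * ((2*(r*s))^n * (2*s)) ^ (q⁻¹.toReal) ≤
      (C : ℝ) * ((2*r)^n * (4*r*s)^n) ^ (p⁻¹.toReal) := by
  have hp0 : p ≠ 0 := (zero_lt_one.trans_le hp).ne'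
  have hq0 : q ≠ 0 := (zero_lt_one.trans_le hq).ne'
  set A : Set (Fin n → ℝ) := Icc (fun _ => -r) (fun _ => r) with hA
  set B : Set (Fin n → ℝ) := Icc (fun _ => -(2*r*s)) (fun _ => 2*r*s) with hB
  set S : Set ((Fin n → ℝ) × ℝ) := (Icc (fun _ => -(r*s)) (fun _ => r*s)) ×ˢ Icc (-s) s with hS
  have hAm : MeasurableSet A := measurableSet_Icc
  have hBm : MeasurableSet B := measurableSet_Icc
  have hSm : MeasurableSet S := measurableSet_Icc.prod measurableSet_Icc
  set f : ((Fin n → ℝ) × (Fin n → ℝ)) → ℝ := (A ×ˢ B).indicator (fun _ => (1:ℝ)) with hf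
  -- volumes
  have volA : volume A = ENNReal.ofReal (2*r) ^ n := by
    rw [hA, Real.volume_Icc_pi]
    simp only [Finset.prod_const, Finset.card_univ, Fintype.card_fin]
    congr 1; ring_nf
  have volB : volume B = ENNReal.ofReal (4*r*s) ^ n := by
    rw [hB, Real.volume_Icc_pi]
    simp only [Finset.prod_const, Finset.card_univ, Fintype.card_fin]
    congr 1; ring_nf
  have volAB : volume (A ×ˢ B) = ENNReal.ofReal (2*r) ^ n * ENNReal.ofReal (4*r*s) ^ n := by
    rw [Measure.volume_eq_prod, Measure.prod_prod, volA, volB]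
  have volS : volume S = ENNReal.ofReal (2*(r*s)) ^ n * ENNReal.ofReal (2*s) := by
    rw [hS, Measure.volume_eq_prod, Measure.prod_prod, Real.volume_Icc_pi, Real.volume_Icc]
    simp only [Finset.prod_const, Finset.card_univ, Fintype.card_fin]
    congr 2
    · ring_nf
    · ring_nf
  have hABfin : volume (A ×ˢ B) ≠ ∞ := by
    rw [volAB]
    exact ENNReal.mul_ne_top (ENNReal.pow_ne_top ENNReal.ofReal_ne_top)
      (ENNReal.pow_ne_top ENNReal.ofReal_ne_top)
  -- f is in Lp and nonneg
  have hmem : MemLp f p volume :=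
    memLp_indicator_const p (hAm.prod hBm) 1 (Or.inr hABfin)
  have hnn : ∀ x, 0 ≤ f x := fun x => Set.indicator_nonneg (fun _ _ => zero_le_one) x
  have hbound := H f hmem hnn
  -- RHS of bound
  have hRHS : eLpNorm f p volume = (volume (A ×ˢ B)) ^ (1 / p.toReal) := by
    rw [hf, eLpNorm_indicator_const (hAm.prod hBm) hp0 hpt]
    simp
  -- the integral equals (2r)^n on S
  have hinteg : ∀ w : (Fin n → ℝ) × ℝ, w ∈ S →
      (∫ x in Icc (-1 : Fin n → ℝ) 1, f (x, w.1 + w.2 • x)) = (2*r)^n := by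
    rintro ⟨y, t⟩ hw
    obtain ⟨hy, ht⟩ := hw
    rw [Set.mem_Icc] at hy ht
    have ht1 : -s ≤ t := ht.1
    have ht2 : t ≤ s := ht.2
    have habt : |t| ≤ s := abs_le.mpr ⟨ht1, ht2⟩
    have hfun : (fun x : Fin n → ℝ => f (x, y + t • x)) = A.indicator (fun _ => (1:ℝ)) := by
      funext x
      by_cases hx : x ∈ A
      · have hx' := hx
        rw [hA, Set.mem_Icc] at hx'
        have hmem2 : (x, y + t • x) ∈ A ×ˢ B := by
          refine ⟨hx, ?_⟩
          rw [hB, Set.mem_Icc]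
          have hcoord : ∀ i, -(2*r*s) ≤ y i + t * x i ∧ y i + t * x i ≤ 2*r*s := by
            intro i
            have h1 : -(r*s) ≤ y i := hy.1 i
            have h2 : y i ≤ r*s := hy.2 i
            have h3 : -r ≤ x i := hx'.1 i
            have h4 : x i ≤ r := hx'.2 i
            have habx : |x i| ≤ r := abs_le.mpr ⟨h3, h4⟩
            have habs : |t * x i| ≤ s * r := by
              rw [abs_mul]
              exact mul_le_mul habt habx (abs_nonneg _) (hs.le)
            have h5 := abs_le.mp habs
            constructor <;> nlinarith [h5.1, h5.2]
          exact ⟨fun i => by simpa using (hcoord i).1, fun i => by simpa using (hcoord i).2⟩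
        rw [hf, Set.indicator_of_mem hmem2, Set.indicator_of_mem hx]
      · have hnm : (x, y + t • x) ∉ A ×ˢ B := fun hc => hx hc.1
        rw [hf, Set.indicator_of_notMem hnm, Set.indicator_of_notMem hx]
    rw [hfun, integral_indicator_const _ hAm, Measure.real, Measure.restrict_apply hAm]
    have hsub : A ∩ Icc (-1 : Fin n → ℝ) 1 = A := by
      apply Set.inter_eq_left.mpr
      intro x hx
      rw [hA, Set.mem_Icc] at hx
      rw [Set.mem_Icc]
      constructor <;> intro i
      · have h := hx.1 i
        simp only [Pi.neg_apply, Pi.one_apply]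
        dsimp only at h
        linarith
      · have h := hx.2 i
        simp only [Pi.one_apply]
        dsimp only at h
        linarith
    rw [hsub, volA]
    simp [ENNReal.toReal_pow, ENNReal.toReal_ofReal (by linarith : (0:ℝ) ≤ 2*r), hr.le]

  -- pointwise bound between indicator and the averaged function
  have hptwise : ∀ w : (Fin n → ℝ) × ℝ,
      ‖S.indicator (fun _ => ((2*r)^n : ℝ)) w‖ ≤
      ‖∫ x in Icc (-1 : Fin n → ℝ) 1, f (x, w.1 + w.2 • x)‖ := by
    intro w
    by_cases hw : w ∈ S
    · rw [Set.indicator_of_mem hw, hinteg w hw]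
    · rw [Set.indicator_of_notMem hw]; simp
  have hmono : eLpNorm (S.indicator (fun _ => ((2*r)^n : ℝ))) q
      (volume.restrict ((Icc (-1 : Fin n → ℝ) 1) ×ˢ (Icc (-1 : ℝ) 1))) ≤
      eLpNorm (fun w : (Fin n → ℝ) × ℝ =>
        ∫ x in Icc (-1 : Fin n → ℝ) 1, f (x, w.1 + w.2 • x)) q
      (volume.restrict ((Icc (-1 : Fin n → ℝ) 1) ×ˢ (Icc (-1 : ℝ) 1))) :=
    eLpNorm_mono hptwise
  have hSsub : S ⊆ (Icc (-1 : Fin n → ℝ) 1) ×ˢ (Icc (-1 : ℝ) 1) := by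
    rw [hS]
    apply Set.prod_mono
    · intro x hx
      rw [Set.mem_Icc] at hx ⊢
      constructor <;> intro i
      · have h := hx.1 i
        simp only [Pi.neg_apply, Pi.one_apply]
        dsimp only at h
        nlinarith
      · have h := hx.2 i
        simp only [Pi.one_apply]
        dsimp only at h
        nlinarith
    · exact Set.Icc_subset_Icc (by linarith) hs1
  have hrestr : (volume.restrict ((Icc (-1 : Fin n → ℝ) 1) ×ˢ (Icc (-1 : ℝ) 1))) S
      = volume S := by
    rw [Measure.restrict_apply hSm, Set.inter_eq_left.mpr hSsub]
  have hSne : (volume.restrict ((Icc (-1 : Fin n → ℝ) 1) ×ˢ (Icc (-1 : ℝ) 1))) S ≠ 0 := by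
    rw [hrestr, volS]
    apply mul_ne_zero
    · exact pow_ne_zero _ (ENNReal.ofReal_pos.mpr (by positivity)).ne'
    · exact (ENNReal.ofReal_pos.mpr (by positivity)).ne'
  have hLHS : eLpNorm (S.indicator (fun _ => ((2*r)^n : ℝ))) q
      (volume.restrict ((Icc (-1 : Fin n → ℝ) 1) ×ˢ (Icc (-1 : ℝ) 1)))
      = ENNReal.ofReal ((2*r)^n) * (volume S) ^ (1 / q.toReal) := by
    rw [eLpNorm_indicator_const' hSm hSne hq0, hrestr,
      Real.enorm_eq_ofReal (by positivity)]
  -- combine, in ℝ≥0∞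
  have E1 : ENNReal.ofReal ((2*r)^n) * (volume S) ^ (1 / q.toReal)
      ≤ (C : ℝ≥0∞) * (volume (A ×ˢ B)) ^ (1 / p.toReal) := by
    rw [← hLHS, ← hRHS]
    exact hmono.trans hbound
  -- pass to real numbers
  have hRfin : (C : ℝ≥0∞) * (volume (A ×ˢ B)) ^ (1 / p.toReal) ≠ ∞ :=
    ENNReal.mul_ne_top ENNReal.coe_ne_top
      (ENNReal.rpow_ne_top_of_nonneg (by positivity) hABfin)
  have E2 := ENNReal.toReal_mono hRfin E1
  rw [ENNReal.toReal_mul, ENNReal.toReal_mul, ENNReal.toReal_ofReal (by positivity),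
    ← ENNReal.toReal_rpow, ← ENNReal.toReal_rpow, volS, volAB,
    ENNReal.toReal_mul, ENNReal.toReal_mul, ENNReal.toReal_pow, ENNReal.toReal_pow,
    ENNReal.toReal_pow, ENNReal.toReal_ofReal (by positivity), ENNReal.toReal_ofReal (by positivity),
    ENNReal.toReal_ofReal (by positivity), ENNReal.toReal_ofReal (by positivity),
    ENNReal.coe_toReal] at E2
  rw [ENNReal.toReal_inv, ENNReal.toReal_inv, ← one_div, ← one_div]
  exact E2


/-- sharpness — if `q > p` and `(1/p, 1/q)` is outside the closed
triangle with vertices `(0,0)`, `(1,1)`, `((n+1)/(n+2), n/(n+2))`, no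
`L^p → L^q([-1,1]^{n+1})` bound holds for the asymmetric average. -/
theorem statement7 (n : ℕ) (hn : 1 ≤ n)
    (p q : ℝ≥0∞) (hp : 1 ≤ p) (hq : 1 ≤ q) (hpq : p < q)
    (h : (p⁻¹.toReal, q⁻¹.toReal) ∉
      convexHull ℝ {((0 : ℝ), (0 : ℝ)), (1, 1),
        (((n : ℝ) + 1) / ((n : ℝ) + 2), (n : ℝ) / ((n : ℝ) + 2))}) :
    ¬ ∃ C : ℝ≥0, ∀ f : ((Fin n → ℝ) × (Fin n → ℝ)) → ℝ, MemLp f p volume →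
      (∀ x, 0 ≤ f x) →
      eLpNorm (fun w : (Fin n → ℝ) × ℝ =>
          ∫ x in Icc (-1 : Fin n → ℝ) 1, f (x, w.1 + w.2 • x)) q
          (volume.restrict ((Icc (-1 : Fin n → ℝ) 1) ×ˢ (Icc (-1 : ℝ) 1)))
        ≤ C * eLpNorm f p volume := by
  rintro ⟨C, H⟩
  have hpt : p ≠ ∞ := hpq.ne_top
  have hp0 : p ≠ 0 := (zero_lt_one.trans_le hp).ne'
  have hq0 : q ≠ 0 := (zero_lt_one.trans_le hq).ne'
  set a : ℝ := p⁻¹.toReal with hae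
  set b : ℝ := q⁻¹.toReal with hbe
  have hpinv_top : p⁻¹ ≠ ⊤ := ENNReal.inv_ne_top.mpr hp0
  have hqinv_top : q⁻¹ ≠ ⊤ := ENNReal.inv_ne_top.mpr hq0
  have ha : 0 < a := ENNReal.toReal_pos (ENNReal.inv_ne_zero.mpr hpt) hpinv_top
  have hb0 : 0 ≤ b := ENNReal.toReal_nonneg
  have hba : b < a := by
    rw [hae, hbe]
    exact (ENNReal.toReal_lt_toReal hqinv_top hpinv_top).mpr (ENNReal.inv_lt_inv.mpr hpq)
  have hn1 : (1:ℝ) ≤ (n:ℝ) := by exact_mod_cast hn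
  by_cases h1 : ((n:ℝ) + 1) * b < (n:ℝ) * a
  · -- vertical scaling counterexample (r = 1, s = δ)
    apply pow_gap_false ((2:ℝ)^n * ((2:ℝ)^(n+1)) ^ b) ((C:ℝ) * ((8:ℝ)^n) ^ a)
      (((n:ℝ) + 1) * b) ((n:ℝ) * a) (by positivity) h1
    intro δ hδ hδ1
    have K := key_ineq n p q hp hpt hq C H 1 δ one_pos le_rfl hδ hδ1
    have l1 : ((2*((1:ℝ)*δ))^n * (2*δ)) = (2:ℝ)^(n+1) * δ^(n+1) := by ring
    have l2 : ((2:ℝ)^(n+1) * δ^(n+1)) ^ b = ((2:ℝ)^(n+1)) ^ b * δ ^ (((n:ℝ)+1)*b) := by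
      rw [Real.mul_rpow (by positivity) (by positivity), ← Real.rpow_natCast δ (n+1),
        ← Real.rpow_mul hδ.le]
      push_cast
      ring_nf
    have h8 : (8:ℝ)^n = 2^n * 4^n := by rw [show (8:ℝ) = 2*4 by norm_num, mul_pow]
    have l3 : ((2*(1:ℝ))^n * (4*1*δ)^n) = (8:ℝ)^n * δ^n := by rw [h8]; ring
    have l4 : ((8:ℝ)^n * δ^n) ^ a = ((8:ℝ)^n) ^ a * δ ^ ((n:ℝ)*a) := by
      rw [Real.mul_rpow (by positivity) (by positivity), ← Real.rpow_natCast δ n,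
        ← Real.rpow_mul hδ.le]
    rw [l1, l2, l3, l4] at K
    have e1 : (2:ℝ)^n * ((2:ℝ)^(n+1)) ^ b * δ ^ (((n:ℝ)+1)*b)
        = (2*(1:ℝ))^n * (((2:ℝ)^(n+1)) ^ b * δ ^ (((n:ℝ)+1)*b)) := by ring
    have e2 : (C:ℝ) * ((8:ℝ)^n) ^ a * δ ^ ((n:ℝ)*a)
        = (C:ℝ) * (((8:ℝ)^n) ^ a * δ ^ ((n:ℝ)*a)) := by ring
    rw [e1, e2]
    exact K
  · by_cases h2 : b < 2 * a - 1
    · -- horizontal scaling counterexample (r = δ, s = 1)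
      apply pow_gap_false ((2:ℝ)^n * ((2:ℝ)^(n+1)) ^ b) ((C:ℝ) * ((8:ℝ)^n) ^ a)
        ((n:ℝ) + (n:ℝ) * b) (2 * (n:ℝ) * a) (by positivity) (by nlinarith)
      intro δ hδ hδ1
      have K := key_ineq n p q hp hpt hq C H δ 1 hδ hδ1 one_pos le_rfl
      have l1 : ((2*(δ*(1:ℝ)))^n * (2*1)) = (2:ℝ)^(n+1) * δ^n := by ring
      have l2 : ((2:ℝ)^(n+1) * δ^n) ^ b = ((2:ℝ)^(n+1)) ^ b * δ ^ ((n:ℝ)*b) := by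
        rw [Real.mul_rpow (by positivity) (by positivity), ← Real.rpow_natCast δ n,
          ← Real.rpow_mul hδ.le]
      have h8 : (8:ℝ)^n = 2^n * 4^n := by rw [show (8:ℝ) = 2*4 by norm_num, mul_pow]
      have l3 : ((2*δ)^n * (4*δ*(1:ℝ))^n) = (8:ℝ)^n * δ^(2*n) := by rw [h8]; ring
      have l4 : ((8:ℝ)^n * δ^(2*n)) ^ a = ((8:ℝ)^n) ^ a * δ ^ (2*(n:ℝ)*a) := by
        rw [Real.mul_rpow (by positivity) (by positivity), ← Real.rpow_natCast δ (2*n),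
          ← Real.rpow_mul hδ.le]
        push_cast
        ring_nf
      rw [l1, l2, l3, l4] at K
      have e1 : (2:ℝ)^n * ((2:ℝ)^(n+1)) ^ b * δ ^ ((n:ℝ) + (n:ℝ)*b)
          = (2*δ)^n * (((2:ℝ)^(n+1)) ^ b * δ ^ ((n:ℝ)*b)) := by
        rw [Real.rpow_add hδ, Real.rpow_natCast]
        ring
      have e2 : (C:ℝ) * ((8:ℝ)^n) ^ a * δ ^ (2*(n:ℝ)*a)
          = (C:ℝ) * (((8:ℝ)^n) ^ a * δ ^ (2*(n:ℝ)*a)) := by ring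
      rw [e1, e2]
      exact K
    · exact h (mem_triangle n a b ha hba.le (not_lt.mp h1) (by linarith [not_lt.mp h2]))
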